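/- The recursive optimal transport quantities satisfy the triangle inequality: d_{mn} ≤ d_{mp} + d_{pn} for all m, n, p ≥ -1. Consequently (m,n) ↦ d_{mn} defines a metric on the set {-1, 0, 1, 2, ...}. -/

import Mathlib

open Finset

/-- `kmPi α i n` is `π_i^n = α_i ∏_{k=i+1}^n (1 - α_k)` (empty product = 1). -/
noncomputable def kmPi (α : ℕ → ℝ) (i n : ℕ) : ℝ :=
  α i * ∏ k ∈ Finset.Icc (i + 1) n, (1 - α k)
/-- A feasible transport plan between the probability vectors `π^m` and `π^n`. -/
def IsPlan (α : ℕ → ℝ) (m n : ℕ) (z : ℕ → ℕ → ℝ) : Prop :=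
  (∀ i ≤ m, ∀ j ≤ n, 0 ≤ z i j) ∧
  (∀ i ≤ m, ∑ j ∈ Finset.range (n + 1), z i j = kmPi α i m) ∧
  (∀ j ≤ n, ∑ i ∈ Finset.range (m + 1), z i j = kmPi α j n)

/-- Transport cost `Σ_{i=0}^m Σ_{j=0}^n z_{ij} d_{i-1,j-1}`, where indices of `D` are
shifted by one: `D i j` stands for `d_{i-1,j-1}`. -/
noncomputable def planCost (D : ℕ → ℕ → ℝ) (m n : ℕ) (z : ℕ → ℕ → ℝ) : ℝ :=
  ∑ i ∈ Finset.range (m + 1), ∑ j ∈ Finset.range (n + 1), z i j * D i j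

/-- `D : ℕ → ℕ → ℝ` encodes the family `d_{mn}` for `m, n ∈ {-1,0,1,...}` with indices
shifted by one: `D (m+1) (n+1) = d_{m,n}`, `D 0 (k+1) = d_{-1,k}`, etc.  It is the
recursive optimal-transport family: boundary values `d_{-1,-1} = 0`,
`d_{-1,k} = d_{k,-1} = 1`, and `d_{mn}` is the minimum transport cost between
`π^m` and `π^n` (the minimum, i.e. attained greatest lower bound). -/
def IsKMDist (α : ℕ → ℝ) (D : ℕ → ℕ → ℝ) : Prop :=
  D 0 0 = 0 ∧ (∀ k : ℕ, D 0 (k + 1) = 1) ∧ (∀ k : ℕ, D (k + 1) 0 = 1) ∧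
  ∀ m n : ℕ,
    IsLeast {c : ℝ | ∃ z : ℕ → ℕ → ℝ, IsPlan α m n z ∧ c = planCost D m n z}
      (D (m + 1) (n + 1))

/-!
Everything is proved by induction on the indices, since the cost of a plan between
`π^m` and `π^n` only involves `d_{ij}` with `i < m`, `j < n`. Symmetry transposes an optimal
plan; `d_{mm} = 0` uses the diagonal plan; `d_{mn} > 0` for `m < n` because the plan must move
the mass `π_n^n = α_n > 0` to `n` from some `i < n`. For the triangle inequality, gluing optimal
plans `z^{mp}` and `z^{pn}` through `p` gives a plan from `π^m` to `π^n` whose cost is at most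
`d_{mp} + d_{pn}` by the inequality for smaller indices; the boundary index `-1` is handled by
`0 ≤ d ≤ 1`, which holds because plans have total mass one.
-/

theorem pair_induction {P : ℕ → ℕ → Prop} (left : ∀ n, P 0 n) (right : ∀ m, P m 0)
    (step : ∀ m n, (∀ i ≤ m, ∀ j ≤ n, P i j) → P (m + 1) (n + 1)) (m n : ℕ) : P m n := by
  induction m using Nat.strong_induction_on generalizing n with
  | _ m ih =>
    obtain _ | m := m
    · exact left n
    obtain _ | n := n
    · exact right _
    exact step m n fun i hi j _ => ih i (by omega) j

theorem div_sum_mul_sum_of_nonneg {ι : Type*} {s : Finset ι} {f : ι → ℝ}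
    (hf : ∀ i ∈ s, 0 ≤ f i) {i : ι} (hi : i ∈ s) :
    f i / (∑ j ∈ s, f j) * ∑ j ∈ s, f j = f i :=
  div_mul_cancel_of_imp fun h => (sum_eq_zero_iff_of_nonneg hf).mp h i hi

section kmPi

variable {α : ℕ → ℝ}

theorem kmPi_self (n : ℕ) : kmPi α n n = α n := by
  simp [kmPi]

theorem kmPi_succ {i n : ℕ} (h : i ≤ n) : kmPi α i (n + 1) = kmPi α i n * (1 - α (n + 1)) := by
  rw [kmPi, kmPi, prod_Icc_succ_top (by omega), mul_assoc]

theorem sum_kmPi (hα0 : α 0 = 1) (n : ℕ) : ∑ i ∈ range (n + 1), kmPi α i n = 1 := by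
  induction n with
  | zero => simp [kmPi_self, hα0]
  | succ n ih =>
    rw [sum_range_succ, kmPi_self,
      sum_congr rfl fun i hi => kmPi_succ (mem_range_succ_iff.mp hi), ← sum_mul, ih]
    ring

theorem kmPi_nonneg (h0 : ∀ n, 0 ≤ α n) (h1 : ∀ n, α n ≤ 1) (i n : ℕ) : 0 ≤ kmPi α i n :=
  mul_nonneg (h0 i) (prod_nonneg fun k _ => sub_nonneg.mpr (h1 k))

end kmPi

section plans

variable {α : ℕ → ℝ} {D D' : ℕ → ℕ → ℝ} {m n p : ℕ} {z w : ℕ → ℕ → ℝ}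

theorem IsPlan.transpose (hz : IsPlan α m n z) : IsPlan α n m (fun j i => z i j) :=
  ⟨fun j hj i hi => hz.1 i hi j hj, hz.2.2, hz.2.1⟩

theorem isPlan_diagonal (h : ∀ i ≤ m, 0 ≤ kmPi α i m) :
    IsPlan α m m (fun i j => if i = j then kmPi α i m else 0) := by
  refine ⟨fun i hi j _ => ?_, fun i hi => ?_, fun j hj => ?_⟩
  · dsimp only
    split_ifs
    exacts [h i hi, le_rfl]
  · simp [sum_ite_eq, hi]
  · simp [sum_ite_eq', hj]

theorem IsPlan.sum_eq_one (hα0 : α 0 = 1) (hz : IsPlan α m n z) :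
    ∑ i ∈ range (m + 1), ∑ j ∈ range (n + 1), z i j = 1 := by
  rw [sum_congr rfl fun i hi => hz.2.1 i (mem_range_succ_iff.mp hi), sum_kmPi hα0]

/-- `z` followed by `w`: the mass `z i k` arriving at `k` is split among the `j` in
proportion to the row `w k ·`, whose total is `π_k^p`. -/
noncomputable def planComp (α : ℕ → ℝ) (p : ℕ) (z w : ℕ → ℕ → ℝ) : ℕ → ℕ → ℝ :=
  fun i j => ∑ k ∈ range (p + 1), z i k * w k j / kmPi α k p

theorem IsPlan.comp_term_nonneg (hz : IsPlan α m p z) (hw : IsPlan α p n w) {i j k : ℕ}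
    (hi : i ≤ m) (hj : j ≤ n) (hk : k ≤ p) : 0 ≤ z i k * w k j / kmPi α k p := by
  refine div_nonneg (mul_nonneg (hz.1 i hi k hk) (hw.1 k hk j hj)) ?_
  rw [← hz.2.2 k hk]
  exact sum_nonneg fun i hi => hz.1 i (mem_range_succ_iff.mp hi) k hk

-- Where `π_k^p = 0` the column `z · k` vanishes, so the junk value `x / 0 = 0` is harmless.
theorem IsPlan.sum_comp_right (hz : IsPlan α m p z) (hw : IsPlan α p n w) {i k : ℕ}
    (hi : i ≤ m) (hk : k ≤ p) : ∑ j ∈ range (n + 1), z i k * w k j / kmPi α k p = z i k := by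
  simp_rw [mul_div_right_comm (z i k)]
  rw [← mul_sum, hw.2.1 k hk, ← hz.2.2 k hk]
  exact div_sum_mul_sum_of_nonneg (fun i hi => hz.1 i (mem_range_succ_iff.mp hi) k hk)
    (mem_range_succ_iff.mpr hi)

theorem IsPlan.sum_comp_left (hz : IsPlan α m p z) (hw : IsPlan α p n w) {j k : ℕ}
    (hj : j ≤ n) (hk : k ≤ p) : ∑ i ∈ range (m + 1), z i k * w k j / kmPi α k p = w k j := by
  simp_rw [mul_comm (z _ k), mul_div_right_comm (w k j)]
  rw [← mul_sum, hz.2.2 k hk, ← hw.2.1 k hk]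
  exact div_sum_mul_sum_of_nonneg (fun j hj => hw.1 k hk j (mem_range_succ_iff.mp hj))
    (mem_range_succ_iff.mpr hj)

theorem IsPlan.comp (hz : IsPlan α m p z) (hw : IsPlan α p n w) :
    IsPlan α m n (planComp α p z w) := by
  refine ⟨fun i hi j hj => sum_nonneg fun k hk => ?_, fun i hi => ?_, fun j hj => ?_⟩
  · exact hz.comp_term_nonneg hw hi hj (mem_range_succ_iff.mp hk)
  · simp only [planComp]
    rw [sum_comm, ← hz.2.1 i hi]
    exact sum_congr rfl fun k hk => hz.sum_comp_right hw hi (mem_range_succ_iff.mp hk)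
  · simp only [planComp]
    rw [sum_comm, ← hw.2.2 j hj]
    exact sum_congr rfl fun k hk => hz.sum_comp_left hw hj (mem_range_succ_iff.mp hk)

theorem planCost_congr (h : ∀ i ≤ m, ∀ j ≤ n, D i j = D' i j) :
    planCost D m n z = planCost D' m n z :=
  sum_congr rfl fun i hi => sum_congr rfl fun j hj => by
    rw [h i (mem_range_succ_iff.mp hi) j (mem_range_succ_iff.mp hj)]

theorem planCost_transpose : planCost D n m (fun j i => z i j) = planCost (fun i j => D j i) m n z :=
  sum_comm

theorem planCost_nonneg (hz : IsPlan α m n z) (hD : ∀ i ≤ m, ∀ j ≤ n, 0 ≤ D i j) :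
    0 ≤ planCost D m n z :=
  sum_nonneg fun i hi => sum_nonneg fun j hj => by
    rw [mem_range_succ_iff] at hi hj
    exact mul_nonneg (hz.1 i hi j hj) (hD i hi j hj)

theorem mul_le_planCost (hz : IsPlan α m n z) (hD : ∀ i ≤ m, ∀ j ≤ n, 0 ≤ D i j) {i j : ℕ}
    (hi : i ≤ m) (hj : j ≤ n) : z i j * D i j ≤ planCost D m n z := by
  have hrow : ∀ i ≤ m, ∀ j ∈ range (n + 1), 0 ≤ z i j * D i j := fun i hi j hj =>
    mul_nonneg (hz.1 i hi j (mem_range_succ_iff.mp hj)) (hD i hi j (mem_range_succ_iff.mp hj))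
  calc z i j * D i j ≤ ∑ j ∈ range (n + 1), z i j * D i j :=
        single_le_sum (hrow i hi) (mem_range_succ_iff.mpr hj)
    _ ≤ planCost D m n z :=
        single_le_sum (f := fun i => ∑ j ∈ range (n + 1), z i j * D i j)
          (fun i hi => sum_nonneg (hrow i (mem_range_succ_iff.mp hi))) (mem_range_succ_iff.mpr hi)

theorem planCost_le_one (hα0 : α 0 = 1) (hz : IsPlan α m n z)
    (hD : ∀ i ≤ m, ∀ j ≤ n, D i j ≤ 1) : planCost D m n z ≤ 1 :=
  calc planCost D m n z ≤ ∑ i ∈ range (m + 1), ∑ j ∈ range (n + 1), z i j := by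
        refine sum_le_sum fun i hi => sum_le_sum fun j hj => ?_
        rw [mem_range_succ_iff] at hi hj
        exact mul_le_of_le_one_right (hz.1 i hi j hj) (hD i hi j hj)
    _ = 1 := hz.sum_eq_one hα0

theorem planCost_comp_le (hz : IsPlan α m p z) (hw : IsPlan α p n w)
    (hD : ∀ i ≤ m, ∀ j ≤ n, ∀ k ≤ p, D i j ≤ D i k + D k j) :
    planCost D m n (planComp α p z w) ≤ planCost D m p z + planCost D p n w :=
  calc planCost D m n (planComp α p z w)
      = ∑ i ∈ range (m + 1), ∑ j ∈ range (n + 1), ∑ k ∈ range (p + 1),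
          z i k * w k j / kmPi α k p * D i j := by
        simp only [planCost, planComp, sum_mul]
    _ ≤ ∑ i ∈ range (m + 1), ∑ j ∈ range (n + 1), ∑ k ∈ range (p + 1),
          z i k * w k j / kmPi α k p * (D i k + D k j) := by
        gcongr with i hi j hj k hk
        · rw [mem_range_succ_iff] at hi hj hk
          exact hz.comp_term_nonneg hw hi hj hk
        · rw [mem_range_succ_iff] at hi hj hk
          exact hD i hi j hj k hk
    _ = ∑ i ∈ range (m + 1), ∑ k ∈ range (p + 1),
            (∑ j ∈ range (n + 1), z i k * w k j / kmPi α k p) * D i k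
        + ∑ k ∈ range (p + 1), ∑ j ∈ range (n + 1),
            (∑ i ∈ range (m + 1), z i k * w k j / kmPi α k p) * D k j := by
        simp only [mul_add, sum_add_distrib, sum_mul]
        congr 1
        · exact sum_congr rfl fun i _ => sum_comm
        · exact (sum_comm.trans (sum_congr rfl fun j _ => sum_comm)).trans sum_comm
    _ = planCost D m p z + planCost D p n w := by
        congr 1 <;> refine sum_congr rfl fun a ha => sum_congr rfl fun b hb => ?_
        · rw [hz.sum_comp_right hw (mem_range_succ_iff.mp ha) (mem_range_succ_iff.mp hb)]
        · rw [hz.sum_comp_left hw (mem_range_succ_iff.mp hb) (mem_range_succ_iff.mp ha)]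

end plans

namespace IsKMDist

variable {α : ℕ → ℝ} {D : ℕ → ℕ → ℝ} (hD : IsKMDist α D)
include hD

theorem le_planCost {m n : ℕ} {z : ℕ → ℕ → ℝ} (hz : IsPlan α m n z) :
    D (m + 1) (n + 1) ≤ planCost D m n z :=
  (hD.2.2.2 m n).2 ⟨z, hz, rfl⟩

theorem exists_optimal (m n : ℕ) :
    ∃ z, IsPlan α m n z ∧ D (m + 1) (n + 1) = planCost D m n z :=
  (hD.2.2.2 m n).1

theorem nonneg : ∀ m n, 0 ≤ D m n := by
  refine pair_induction (fun n => ?_) (fun m => ?_) fun m n ih => ?_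
  · obtain _ | n := n <;> simp [hD.1, hD.2.1]
  · obtain _ | m := m <;> simp [hD.1, hD.2.2.1]
  · obtain ⟨z, hz, hzD⟩ := hD.exists_optimal m n
    exact hzD ▸ planCost_nonneg hz ih

theorem le_one (hα0 : α 0 = 1) : ∀ m n, D m n ≤ 1 := by
  refine pair_induction (fun n => ?_) (fun m => ?_) fun m n ih => ?_
  · obtain _ | n := n <;> simp [hD.1, hD.2.1]
  · obtain _ | m := m <;> simp [hD.1, hD.2.2.1]
  · obtain ⟨z, hz, hzD⟩ := hD.exists_optimal m n
    exact hzD ▸ planCost_le_one hα0 hz ih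

theorem succ_le_succ_swap {m n : ℕ} (h : ∀ i ≤ m, ∀ j ≤ n, D i j = D j i) :
    D (n + 1) (m + 1) ≤ D (m + 1) (n + 1) := by
  obtain ⟨z, hz, hzD⟩ := hD.exists_optimal m n
  calc D (n + 1) (m + 1) ≤ planCost D n m (fun j i => z i j) := hD.le_planCost hz.transpose
    _ = D (m + 1) (n + 1) := by
      rw [planCost_transpose, hzD]
      exact planCost_congr fun i hi j hj => (h i hi j hj).symm

theorem symm : ∀ m n, D m n = D n m := by
  refine pair_induction (fun n => ?_) (fun m => ?_) fun m n ih => ?_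
  · obtain _ | n := n <;> simp [hD.2.1, hD.2.2.1]
  · obtain _ | m := m <;> simp [hD.2.1, hD.2.2.1]
  · exact le_antisymm (hD.succ_le_succ_swap fun j hj i hi => (ih i hi j hj).symm)
      (hD.succ_le_succ_swap ih)

theorem diag (h0 : ∀ n, 0 ≤ α n) (h1 : ∀ n, α n ≤ 1) (m : ℕ) : D m m = 0 := by
  induction m using Nat.strong_induction_on with
  | _ m ih =>
    obtain _ | m := m
    · exact hD.1
    refine le_antisymm ?_ (hD.nonneg _ _)
    calc D (m + 1) (m + 1)
        ≤ planCost D m m (fun i j => if i = j then kmPi α i m else 0) :=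
          hD.le_planCost (isPlan_diagonal fun i _ => kmPi_nonneg h0 h1 i m)
      _ = 0 := by
          simp only [planCost, ite_mul, zero_mul, sum_ite_eq, mem_range]
          exact sum_eq_zero fun i hi => by simp [ih i (mem_range.mp hi)]

theorem succ_succ_pos {m n : ℕ} (hαn : 0 < α n) (h : ∀ i ≤ m, 0 < D i n) :
    0 < D (m + 1) (n + 1) := by
  obtain ⟨z, hz, hzD⟩ := hD.exists_optimal m n
  have hcol : ∑ _i ∈ range (m + 1), (0 : ℝ) < ∑ i ∈ range (m + 1), z i n := by
    rw [hz.2.2 n le_rfl, kmPi_self, sum_const_zero]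
    exact hαn
  obtain ⟨i, hi, hzi⟩ := exists_lt_of_sum_lt hcol
  rw [mem_range_succ_iff] at hi
  exact hzD ▸ (mul_pos hzi (h i hi)).trans_le
    (mul_le_planCost hz (fun i _ j _ => hD.nonneg i j) hi le_rfl)

theorem pos_of_ne (hpos : ∀ n, 0 < α n) : ∀ m n, m ≠ n → 0 < D m n := by
  refine pair_induction (fun n hn => ?_) (fun m hm => ?_) fun m n ih hmn => ?_
  · obtain _ | n := n <;> simp_all [hD.2.1]
  · obtain _ | m := m <;> simp_all [hD.2.2.1]
  · rcases Nat.lt_or_gt_of_ne (by omega : m ≠ n) with h | h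
    · exact hD.succ_succ_pos (hpos n) fun i hi => ih i hi n le_rfl (by omega)
    · rw [hD.symm]
      exact hD.succ_succ_pos (hpos m) fun j hj => hD.symm m j ▸ ih m le_rfl j hj (by omega)

theorem eq_zero_iff (hpos : ∀ n, 0 < α n) (h1 : ∀ n, α n ≤ 1) (m n : ℕ) :
    D m n = 0 ↔ m = n :=
  ⟨fun h => by_contra fun hmn => (hD.pos_of_ne hpos m n hmn).ne' h,
    by rintro rfl; exact hD.diag (fun n => (hpos n).le) h1 m⟩

theorem triangle_zero_left (hα0 : α 0 = 1) (n p : ℕ) : D 0 n ≤ D 0 p + D p n := by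
  obtain _ | p := p
  · rw [hD.1, zero_add]
  · rw [hD.2.1]
    linarith [hD.le_one hα0 0 n, hD.nonneg (p + 1) n]

theorem triangle_zero_middle (hα0 : α 0 = 1) (m n : ℕ) : D m n ≤ D m 0 + D 0 n := by
  obtain _ | m := m
  · rw [hD.1, zero_add]
  · rw [hD.2.2.1]
    linarith [hD.le_one hα0 (m + 1) n, hD.nonneg 0 n]

theorem triangle_succ {m n p : ℕ} (h : ∀ i ≤ m, ∀ j ≤ n, ∀ k ≤ p, D i j ≤ D i k + D k j) :
    D (m + 1) (n + 1) ≤ D (m + 1) (p + 1) + D (p + 1) (n + 1) := by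
  obtain ⟨z, hz, hzD⟩ := hD.exists_optimal m p
  obtain ⟨w, hw, hwD⟩ := hD.exists_optimal p n
  rw [hzD, hwD]
  exact (hD.le_planCost (hz.comp hw)).trans (planCost_comp_le hz hw h)

theorem triangle (hα0 : α 0 = 1) (m n p : ℕ) : D m n ≤ D m p + D p n := by
  induction m using Nat.strong_induction_on generalizing n p with
  | _ m ih =>
    obtain _ | m := m
    · exact hD.triangle_zero_left hα0 n p
    obtain _ | n := n
    · rw [hD.symm _ 0, hD.symm _ p, hD.symm p 0, add_comm (D p _)]
      exact hD.triangle_zero_left hα0 _ _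
    obtain _ | p := p
    · exact hD.triangle_zero_middle hα0 _ _
    exact hD.triangle_succ fun i hi j _ k _ => ih i (by omega) j k

end IsKMDist

/-- the triangle inequality `d_{mn} ≤ d_{mp} + d_{pn}` holds for all
`m, n, p ≥ -1` (shifted indices); consequently `d` is a metric on `{-1,0,1,...}`. -/
theorem km_dist_triangle (α : ℕ → ℝ) (hα0 : α 0 = 1)
    (hα : ∀ n, 1 ≤ n → α n ∈ Set.Ioo (0 : ℝ) 1)
    (D : ℕ → ℕ → ℝ) (hD : IsKMDist α D) :
    (∀ m n p : ℕ, D m n ≤ D m p + D p n) ∧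
    (∀ m n : ℕ, 0 ≤ D m n) ∧
    (∀ m n : ℕ, D m n = D n m) ∧
    (∀ m n : ℕ, D m n = 0 ↔ m = n) := by
  have hα01 : ∀ n, 0 < α n ∧ α n ≤ 1 := fun n => by
    obtain _ | n := n
    · simp [hα0]
    · exact ⟨(hα _ n.succ_pos).1, (hα _ n.succ_pos).2.le⟩
  exact ⟨hD.triangle hα0, hD.nonneg, hD.symm,
    hD.eq_zero_iff (fun n => (hα01 n).1) fun n => (hα01 n).2⟩
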